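/- arXiv:1603.04284 — 3 statements merged into one kernel-verified Lean document; each statement's English description precedes it below -/
import Mathlib

section
/- Let x : (multi-indices of order n in ℕ^d) → ℂ represent a vector in the symmetric subspace X_n, and let m_1,...,m_d ∈ ℂ^d be the rows of a matrix M ∈ ℂ^{d×d}. Then the action of M^{⊗n} on x, viewed in X_n, is given componentwise by (M^{⊗n}x)_k = Σ over α_1,...,α_d ∈ ℕ^d with |α_j| = k_j of binom(k_1,α_1)···binom(k_d,α_d) · m_1^{α_1}···m_d^{α_d} · x_{α_1+···+α_d}, for each k with |k| = n. -/
/-- The entry-count multi-index of a tuple `j ∈ {1,...,d}^n`. -/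
def cnt {n d : ℕ} (j : Fin n → Fin d) (m : Fin d) : ℕ :=
  (Finset.univ.filter fun t => j t = m).card

open Finset

/-- Count function for maps from an arbitrary finite type to `Fin d`. -/
def ccnt {S : Type*} [Fintype S] {d : ℕ} (g : S → Fin d) (r : Fin d) : ℕ :=
  (Finset.univ.filter fun s => g s = r).card

lemma sum_ccnt {S : Type*} [Fintype S] {d : ℕ} (g : S → Fin d) :
    ∑ r, ccnt g r = Fintype.card S := by
  simpa [ccnt] using (Finset.card_eq_sum_card_fiberwise
    (fun s (_ : s ∈ (univ : Finset S)) => Finset.mem_univ (g s))).symm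

lemma ccnt_comp_equiv {S T : Type*} [Fintype S] [Fintype T] {d : ℕ}
    (e : T ≃ S) (g : S → Fin d) : ccnt (fun t => g (e t)) = ccnt g := by
  funext r
  have h1 : ccnt (fun t => g (e t)) r = Fintype.card {t : T // g (e t) = r} :=
    (Fintype.card_subtype _).symm
  have h2 : ccnt g r = Fintype.card {s : S // g s = r} := (Fintype.card_subtype _).symm
  rw [h1, h2]
  exact Fintype.card_congr (e.subtypeEquiv fun t => Iff.rfl)

lemma ccnt_cons {N d : ℕ} (r : Fin d) (g : Fin N → Fin d) :
    ccnt (Fin.cons r g) = fun m => ccnt g m + if m = r then 1 else 0 := by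
  funext m
  simp only [ccnt, Finset.card_filter, Fin.sum_univ_succ, Fin.cons_zero, Fin.cons_succ]
  rw [add_comm]
  congr 1
  simp [eq_comm]

lemma pascal_step {d : ℕ} (β : Fin d → ℕ) (r : Fin d) :
    (β r + 1) * Nat.multinomial Finset.univ (fun m => β m + if m = r then 1 else 0)
      = ((∑ m, β m) + 1) * Nat.multinomial Finset.univ β := by
  set γ : Fin d → ℕ := fun m => β m + if m = r then 1 else 0 with hγ
  have hprod : ∏ m, Nat.factorial (γ m) = (β r + 1) * ∏ m, Nat.factorial (β m) := by
    have h : ∀ m : Fin d, Nat.factorial (γ m)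
        = (if m = r then β r + 1 else 1) * Nat.factorial (β m) := by
      intro m
      by_cases h : m = r
      · subst h; simp [hγ, Nat.factorial_succ]
      · simp [hγ, h]
    rw [Finset.prod_congr rfl fun m _ => h m, Finset.prod_mul_distrib,
      Finset.prod_ite_eq' univ r (fun _ => β r + 1)]
    simp
  have hsum : ∑ m, γ m = (∑ m, β m) + 1 := by
    simp [hγ, Finset.sum_add_distrib]
  have h1 := Nat.multinomial_spec univ γ
  have h2 := Nat.multinomial_spec univ β
  have hpos : 0 < ∏ m, Nat.factorial (β m) := Finset.prod_pos fun m _ => Nat.factorial_pos _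
  apply Nat.eq_of_mul_eq_mul_left hpos
  calc (∏ m, Nat.factorial (β m)) * ((β r + 1) * Nat.multinomial univ γ)
      = (∏ m, Nat.factorial (γ m)) * Nat.multinomial univ γ := by rw [hprod]; ring
    _ = Nat.factorial (∑ m, γ m) := h1
    _ = ((∑ m, β m) + 1) * Nat.factorial (∑ m, β m) := by rw [hsum, Nat.factorial_succ]
    _ = ((∑ m, β m) + 1) * ((∏ m, Nat.factorial (β m)) * Nat.multinomial univ β) := by rw [h2]
    _ = (∏ m, Nat.factorial (β m)) * (((∑ m, β m) + 1) * Nat.multinomial univ β) := by ring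

/-- The fundamental counting identity: summing any function of the count multi-index
over all tuples equals a multinomial-weighted sum over the antidiagonal. -/
lemma lemA (d : ℕ) : ∀ (N : ℕ) (Φ : (Fin d → ℕ) → ℕ),
    ∑ g : Fin N → Fin d, Φ (ccnt g)
      = ∑ β ∈ Finset.Nat.antidiagonalTuple d N, Nat.multinomial Finset.univ β * Φ β := by
  intro N
  induction N with
  | zero =>
    intro Φ
    have h0 : ∀ g : Fin 0 → Fin d, ccnt g = (fun _ => 0 : Fin d → ℕ) := by
      intro g; funext r; simp [ccnt]
    rw [Finset.Nat.antidiagonalTuple_zero_right, Finset.sum_singleton]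
    have : Nat.multinomial (univ : Finset (Fin d)) (0 : Fin d → ℕ) = 1 := by
      simp [Nat.multinomial]
    rw [this, one_mul]
    rw [Fintype.sum_congr _ _ (fun g => by rw [h0 g])]
    simp [Pi.zero_def]
  | succ N ih =>
    intro Φ
    have hsplit : ∑ g : Fin (N+1) → Fin d, Φ (ccnt g)
        = ∑ r : Fin d, ∑ g : Fin N → Fin d,
            Φ (fun m => ccnt g m + if m = r then 1 else 0) := by
      rw [← (Fin.consEquiv (fun _ : Fin (N+1) => Fin d)).sum_comp
        (fun g => Φ (ccnt g))]
      rw [Fintype.sum_prod_type]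
      refine Finset.sum_congr rfl fun r _ => Finset.sum_congr rfl fun g _ => ?_
      have : (Fin.consEquiv (fun _ : Fin (N+1) => Fin d)) (r, g) = Fin.cons r g := rfl
      rw [this, ccnt_cons]
    rw [hsplit]
    have hih : ∀ r : Fin d, ∑ g : Fin N → Fin d,
        Φ (fun m => ccnt g m + if m = r then 1 else 0)
        = ∑ β ∈ Finset.Nat.antidiagonalTuple d N,
            Nat.multinomial Finset.univ β * Φ (fun m => β m + if m = r then 1 else 0) := by
      intro r
      exact ih (fun β => Φ (fun m => β m + if m = r then 1 else 0))
    rw [Finset.sum_congr rfl fun r _ => hih r]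
    apply Nat.eq_of_mul_eq_mul_left (show 0 < N + 1 from Nat.succ_pos N)
    rw [Finset.mul_sum, Finset.mul_sum]
    have step1 : ∀ r : Fin d,
        (N + 1) * ∑ β ∈ Finset.Nat.antidiagonalTuple d N,
            Nat.multinomial Finset.univ β * Φ (fun m => β m + if m = r then 1 else 0)
        = ∑ γ ∈ Finset.Nat.antidiagonalTuple d (N+1),
            γ r * Nat.multinomial Finset.univ γ * Φ γ := by
      intro r
      rw [Finset.mul_sum]
      have e1 : ∑ β ∈ Finset.Nat.antidiagonalTuple d N,
          (N + 1) * (Nat.multinomial Finset.univ β * Φ (fun m => β m + if m = r then 1 else 0))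
          = ∑ β ∈ Finset.Nat.antidiagonalTuple d N,
            ((β r + 1)
              * Nat.multinomial Finset.univ (fun m => β m + if m = r then 1 else 0)
              * Φ (fun m => β m + if m = r then 1 else 0)) := by
        refine Finset.sum_congr rfl fun β hβ => ?_
        have hβN : ∑ m, β m = N := Finset.Nat.mem_antidiagonalTuple.mp hβ
        have := pascal_step β r
        rw [hβN] at this
        rw [← mul_assoc, ← this]
      rw [e1]
      rw [show ∑ γ ∈ Finset.Nat.antidiagonalTuple d (N+1),
            γ r * Nat.multinomial Finset.univ γ * Φ γ
          = ∑ γ ∈ (Finset.Nat.antidiagonalTuple d (N+1)).filter (fun γ => γ r ≠ 0),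
            γ r * Nat.multinomial Finset.univ γ * Φ γ from
        (Finset.sum_filter_of_ne (fun γ _ hne => by
          intro h0
          exact hne (by rw [h0]; ring))).symm]
      refine Finset.sum_nbij' (fun β => fun m => β m + if m = r then 1 else 0)
        (fun γ => fun m => γ m - if m = r then 1 else 0) ?_ ?_ ?_ ?_ ?_
      · intro β hβ
        rw [Finset.mem_filter, Finset.Nat.mem_antidiagonalTuple]
        constructor
        · rw [Finset.sum_add_distrib, Finset.Nat.mem_antidiagonalTuple.mp hβ]
          simp
        · simp
      · intro γ hγ
        rw [Finset.mem_filter] at hγ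
        obtain ⟨hγ1, hγ2⟩ := hγ
        rw [Finset.Nat.mem_antidiagonalTuple]
        have hpos : 1 ≤ γ r := Nat.one_le_iff_ne_zero.mpr hγ2
        have hN1 : ∑ m, γ m = N + 1 := Finset.Nat.mem_antidiagonalTuple.mp hγ1
        have hsum : ∑ m, γ m = (∑ m, (γ m - if m = r then 1 else 0)) + 1 := by
          calc ∑ m, γ m
              = ∑ m, ((γ m - if m = r then 1 else 0) + if m = r then 1 else 0) := by
                refine Finset.sum_congr rfl fun m _ => ?_
                by_cases h : m = r
                · subst h; simp [Nat.sub_add_cancel hpos]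
                · simp [h]
            _ = (∑ m, (γ m - if m = r then 1 else 0)) + ∑ m, (if m = r then 1 else 0) :=
                Finset.sum_add_distrib
            _ = (∑ m, (γ m - if m = r then 1 else 0)) + 1 := by simp
        exact Nat.add_right_cancel (by rw [← hsum, hN1])
      · intro β hβ
        funext m
        by_cases h : m = r <;> simp [h]
      · intro γ hγ
        rw [Finset.mem_filter] at hγ
        have hpos : 1 ≤ γ r := Nat.one_le_iff_ne_zero.mpr hγ.2
        funext m
        by_cases h : m = r
        · subst h; simp [Nat.sub_add_cancel hpos]
        · simp [h]
      · intro β hβ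
        simp
    rw [Finset.sum_congr rfl fun r _ => step1 r]
    rw [Finset.sum_comm]
    refine Finset.sum_congr rfl fun γ hγ => ?_
    have hγs : ∑ r, γ r = N + 1 := Finset.Nat.mem_antidiagonalTuple.mp hγ
    rw [show ∑ r : Fin d, γ r * Nat.multinomial Finset.univ γ * Φ γ
        = (∑ r, γ r) * (Nat.multinomial Finset.univ γ * Φ γ) by
      rw [Finset.sum_mul]; refine Finset.sum_congr rfl fun r _ => by ring]
    rw [hγs]

/-- The number of maps `S → Fin d` with prescribed count multi-index `β` is the
multinomial coefficient of `β`. -/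
lemma lemC {S : Type*} [Fintype S] [DecidableEq S] (d : ℕ) (β : Fin d → ℕ)
    (hβ : ∑ r, β r = Fintype.card S) :
    Fintype.card {g : S → Fin d // ccnt g = β} = Nat.multinomial Finset.univ β := by
  classical
  have key : ∑ g : S → Fin d, (if ccnt g = β then 1 else 0)
      = ∑ β' ∈ Finset.Nat.antidiagonalTuple d (Fintype.card S),
          Nat.multinomial Finset.univ β' * (if β' = β then 1 else 0) := by
    rw [← lemA d (Fintype.card S) (fun β0 => if β0 = β then 1 else 0)]
    refine Fintype.sum_equiv
      (Equiv.arrowCongr (Fintype.equivFin S) (Equiv.refl (Fin d))) _ _ fun g => ?_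
    have h0 : ((Equiv.arrowCongr (Fintype.equivFin S) (Equiv.refl (Fin d))) g)
        = fun t => g ((Fintype.equivFin S).symm t) := rfl
    rw [h0, ccnt_comp_equiv (Fintype.equivFin S).symm g]
  have hL : ∑ g : S → Fin d, (if ccnt g = β then 1 else 0)
      = Fintype.card {g : S → Fin d // ccnt g = β} := by
    rw [Fintype.card_subtype, Finset.card_filter]
  have hR : ∑ β' ∈ Finset.Nat.antidiagonalTuple d (Fintype.card S),
      Nat.multinomial Finset.univ β' * (if β' = β then 1 else 0)
      = Nat.multinomial Finset.univ β := by
    rw [Finset.sum_congr rfl fun β' _ => by rw [mul_ite, mul_one, mul_zero]]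
    rw [Finset.sum_ite_eq']
    rw [if_pos (Finset.Nat.mem_antidiagonalTuple.mpr hβ)]
  rw [← hL, key, hR]

lemma prod_comp_ccnt {S : Type*} [Fintype S] {d : ℕ} (g : S → Fin d) (v : Fin d → ℂ) :
    ∏ s, v (g s) = ∏ r, v r ^ ccnt g r := by
  rw [← Finset.prod_fiberwise_of_maps_to (fun s (_ : s ∈ univ) => Finset.mem_univ (g s))
    (fun s => v (g s))]
  refine Finset.prod_congr rfl fun r _ => ?_
  rw [Finset.prod_congr rfl
    (fun s hs => by rw [(Finset.mem_filter.mp hs).2] :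
      ∀ s ∈ univ.filter (fun s => g s = r), v (g s) = v r)]
  rw [Finset.prod_const]
  rfl

/-- Decompose a tuple `j : Fin n → Fin d` into its restrictions to the fibers of `i`. -/
def fibEquiv {n d : ℕ} (i : Fin n → Fin d) :
    (Fin n → Fin d) ≃ (∀ m : Fin d, {t : Fin n // i t = m} → Fin d) where
  toFun j m s := j s.1
  invFun h t := h (i t) ⟨t, rfl⟩
  left_inv j := rfl
  right_inv h := by
    funext m s
    obtain ⟨t, ht⟩ := s
    subst ht
    rfl

/-- Explicit formula for the action of the `n`-fold Kronecker product `M^{⊗n}` on a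
vector `x` of the symmetric subspace `X_n` (represented by its values `y` on
multi-indices, i.e. `x_j = y (cnt j)`), in terms of the rows of `M`. -/
theorem kronecker_action_formula (d n : ℕ) (M : Matrix (Fin d) (Fin d) ℂ)
    (y : (Fin d → ℕ) → ℂ) (i : Fin n → Fin d) (k : Fin d → ℕ) (hk : cnt i = k) :
    (∑ j : Fin n → Fin d, (∏ t, M (i t) (j t)) * y (cnt j)) =
      ∑ α ∈ Fintype.piFinset (fun m => Finset.Nat.antidiagonalTuple d (k m)),
        (∏ m, (Nat.multinomial Finset.univ (α m) : ℂ) * ∏ r, M m r ^ α m r) *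
          y (fun r => ∑ m, α m r) := by
  classical
  set E := fibEquiv i with hE
  have hcard : ∀ m : Fin d, Fintype.card {t : Fin n // i t = m} = k m := by
    intro m
    rw [Fintype.card_subtype]
    exact congrFun hk m
  have hmaps : ∀ j : Fin n → Fin d, (fun m => ccnt (E j m)) ∈
      Fintype.piFinset (fun m => Finset.Nat.antidiagonalTuple d (k m)) := by
    intro j
    rw [Fintype.mem_piFinset]
    intro m
    rw [Finset.Nat.mem_antidiagonalTuple, sum_ccnt, hcard]
  rw [← Finset.sum_fiberwise_of_maps_to (fun j (_ : j ∈ univ) => hmaps j)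
    (fun j => (∏ t, M (i t) (j t)) * y (cnt j))]
  refine Finset.sum_congr rfl fun α hα => ?_
  have hα' : ∀ m, ∑ r, α m r = k m := by
    intro m
    exact Finset.Nat.mem_antidiagonalTuple.mp ((Fintype.mem_piFinset.mp hα) m)
  have hconst : ∀ j ∈ Finset.univ.filter (fun j => (fun m => ccnt (E j m)) = α),
      (∏ t, M (i t) (j t)) * y (cnt j)
      = (∏ m, ∏ r, M m r ^ α m r) * y (fun r => ∑ m, α m r) := by
    intro j hj
    have hj2 : (fun m => ccnt (E j m)) = α := (Finset.mem_filter.mp hj).2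
    have hF3 : (∏ t, M (i t) (j t)) = ∏ m, ∏ r, M m r ^ α m r := by
      rw [← Fintype.prod_fiberwise i (fun t => M (i t) (j t))]
      refine Finset.prod_congr rfl fun m _ => ?_
      rw [Fintype.prod_congr _ _ (fun s : {t // i t = m} =>
        show M (i s.1) (j s.1) = M m (E j m s) by
          obtain ⟨t, ht⟩ := s; rw [ht]; rfl)]
      rw [prod_comp_ccnt (E j m) (fun r => M m r)]
      rw [show ccnt (E j m) = α m from congrFun hj2 m]
    have hF1 : cnt j = fun r => ∑ m, α m r := by
      funext r
      have h1 : cnt j r = ∑ t, if j t = r then 1 else 0 := Finset.card_filter _ _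
      have h2 : ∀ m, ccnt (E j m) r = ∑ s : {t // i t = m}, if j s.1 = r then 1 else 0 :=
        fun m => Finset.card_filter _ _
      rw [h1, ← Fintype.sum_fiberwise i (fun t => if j t = r then 1 else 0)]
      rw [← hj2]
      exact Finset.sum_congr rfl fun m _ => (h2 m).symm
    rw [hF3, hF1]
  rw [Finset.sum_congr rfl hconst, Finset.sum_const]
  have hcardfib : (Finset.univ.filter (fun j => (fun m => ccnt (E j m)) = α)).card
      = ∏ m, Nat.multinomial Finset.univ (α m) := by
    rw [← Fintype.card_subtype]
    have e2 : {j : Fin n → Fin d // (fun m => ccnt (E j m)) = α}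
        ≃ {h : ∀ m : Fin d, {t : Fin n // i t = m} → Fin d // (fun m => ccnt (h m)) = α} :=
      E.subtypeEquiv fun j => Iff.rfl
    have e3 : {h : ∀ m : Fin d, {t : Fin n // i t = m} → Fin d // (fun m => ccnt (h m)) = α}
        ≃ {h : ∀ m : Fin d, {t : Fin n // i t = m} → Fin d // ∀ m, ccnt (h m) = α m} :=
      (Equiv.refl _).subtypeEquiv fun h => funext_iff
    have e1 : {j : Fin n → Fin d // (fun m => ccnt (E j m)) = α}
        ≃ ∀ m, {g : {t : Fin n // i t = m} → Fin d // ccnt g = α m} :=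
      e2.trans (e3.trans (Equiv.subtypePiEquivPi (p := fun m g => ccnt g = α m)))
    rw [Fintype.card_congr e1, Fintype.card_pi]
    refine Finset.prod_congr rfl fun m _ => ?_
    exact lemC d (α m) (by rw [hcard]; exact hα' m)
  rw [hcardfib, nsmul_eq_mul, Nat.cast_prod]
  rw [← mul_assoc, ← Finset.prod_mul_distrib]
end

section
/- For M ∈ ℂ^{d×d} with rows m_1,...,m_d, and y ∈ ℂ^{L_n} labeled by multi-indices of order n, the symmetric Kronecker product satisfies (S_n(M) y)_k = (1/√(k!)) Σ_{|α_1|=k_1} ··· Σ_{|α_d|=k_d} binom(k_1,α_1)···binom(k_d,α_d) · m_1^{α_1}···m_d^{α_d} · √((α_1+···+α_d)!) · y_{α_1+···+α_d}, for every k ∈ ℕ^d with |k| = n. -/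
/-!
Writing `S_n(M) = P_n M^{⊗n} P_n*`, the vector `P_n* y` depends on a tuple only through its
count vector, and row `k` of `P_n` averages over the `multinomial k` tuples with counts `k`.
The heart of the matter is that, for a tuple `j` with counts `k` and any weight `f`,
`∑_{j'} ∏_t M_{j_t j'_t} f(cnt j') = ∑_α ∏_m binom(k_m, α_m) m_m^{α_m} f(α_1 + ⋯ + α_d)`.
Both sides are images, under the linear functional `X^e ↦ f e` on polynomials, of
`∏_t ∑_r M_{j_t r} X_r = ∏_m (∑_r M_{m r} X_r)^{k_m}`, the right one after expanding each power
by the multinomial theorem. The normalisations then combine through `multinomial c · c! = n!`.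
-/

open Matrix

/-- The normalized indicator vector `p_k` of the class of tuples with entry counts `k`. -/
noncomputable def pvec (d n : ℕ) (k : Fin d → ℕ) : (Fin n → Fin d) → ℂ :=
  fun j => if cnt j = k then
    ((Real.sqrt ((Finset.univ.filter fun j' : Fin n → Fin d => cnt j' = k).card) : ℝ) : ℂ)⁻¹
  else 0

/-- The `L_n × d^n` matrix `P_n` whose rows are the orthonormal vectors `p_i`. -/
noncomputable def Pmat (d n : ℕ) :
    Matrix ↥(Finset.Nat.antidiagonalTuple d n) (Fin n → Fin d) ℂ :=
  Matrix.of fun i j => pvec d n i.1 j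

/-- The `n`-fold Kronecker product `M^{⊗n}` of `M` with itself, as a
`d^n × d^n` matrix indexed by tuples. -/
def kronPow (d n : ℕ) (M : Matrix (Fin d) (Fin d) ℂ) :
    Matrix (Fin n → Fin d) (Fin n → Fin d) ℂ :=
  Matrix.of fun i j => ∏ t, M (i t) (j t)

/-- The `n`-fold symmetric Kronecker product `S_n(M) = P_n M^{⊗n} P_n*`. -/
noncomputable def symKron (d n : ℕ) (M : Matrix (Fin d) (Fin d) ℂ) :
    Matrix ↥(Finset.Nat.antidiagonalTuple d n) ↥(Finset.Nat.antidiagonalTuple d n) ℂ :=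
  Pmat d n * kronPow d n M * (Pmat d n)ᴴ

open Finset MvPolynomial

section MvPolynomial

variable {R σ : Type*} [CommSemiring R] [Fintype σ]

lemma C_mul_prod_X_pow_eq_monomial (a : R) (e : σ → ℕ) :
    C a * ∏ r, X r ^ e r = monomial (Finsupp.equivFunOnFinite.symm e) a := by
  rw [monomial_eq, Finsupp.prod_fintype _ _ (by simp)]
  rfl

lemma sum_mul_apply_eq_of_sum_C_mul_prod_X_pow_eq {ι ι' : Type*} {s : Finset ι} {s' : Finset ι'}
    {w : ι → R} {e : ι → σ → ℕ} {w' : ι' → R} {e' : ι' → σ → ℕ}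
    (h : ∑ i ∈ s, C (w i) * ∏ r, X r ^ e i r = ∑ i ∈ s', C (w' i) * ∏ r, X r ^ e' i r)
    (f : (σ → ℕ) → R) :
    ∑ i ∈ s, w i * f (e i) = ∑ i ∈ s', w' i * f (e' i) := by
  let L : MvPolynomial σ R →ₗ[R] R := Finsupp.linearCombination R (fun m : σ →₀ ℕ => f m) ∘ₗ
    (AddMonoidAlgebra.coeffLinearEquiv R).toLinearMap
  have hL (a : R) (e : σ → ℕ) : L (C a * ∏ r, X r ^ e r) = a * f e := by
    rw [C_mul_prod_X_pow_eq_monomial]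
    exact Finsupp.linearCombination_single R a _
  simpa only [map_sum, hL] using congrArg L h

lemma sum_C_mul_X_pow_eq [DecidableEq σ] (a : σ → R) (k : ℕ) :
    (∑ r, C (a r) * X r) ^ k = ∑ β ∈ piAntidiag univ k,
      C (Nat.multinomial univ β * ∏ r, a r ^ β r) * ∏ r, (X r : MvPolynomial σ R) ^ β r := by
  rw [sum_pow_eq_sum_piAntidiag]
  refine sum_congr rfl fun β _ => ?_
  simp only [mul_pow, prod_mul_distrib, map_mul, map_prod, map_pow, map_natCast]
  ring

end MvPolynomial

lemma sqrt_multinomial_mul_inv_sqrt_multinomial {ι : Type*} (s : Finset ι) {a b : ι → ℕ}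
    (hab : ∑ i ∈ s, a i = ∑ i ∈ s, b i) :
    √(Nat.multinomial s a : ℝ) * (√(Nat.multinomial s b : ℝ))⁻¹
      = (√((∏ i ∈ s, (a i).factorial : ℕ) : ℝ))⁻¹ * √((∏ i ∈ s, (b i).factorial : ℕ) : ℝ) := by
  have hsqrt (c : ι → ℕ) : √((∏ i ∈ s, (c i).factorial : ℕ) : ℝ) * √(Nat.multinomial s c : ℝ)
      = √((∑ i ∈ s, c i).factorial : ℝ) := by
    rw [← Real.sqrt_mul (Nat.cast_nonneg _), ← Nat.cast_mul, Nat.multinomial_spec]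
  have hb : √(Nat.multinomial s b : ℝ) ≠ 0 :=
    Real.sqrt_ne_zero'.mpr (by exact_mod_cast Nat.multinomial_pos s b)
  have ha : √((∏ i ∈ s, (a i).factorial : ℕ) : ℝ) ≠ 0 :=
    Real.sqrt_ne_zero'.mpr (by exact_mod_cast prod_pos fun i _ => (a i).factorial_pos)
  have hsqrt_a := hsqrt a
  rw [hab] at hsqrt_a
  field_simp
  linear_combination hsqrt_a - hsqrt b

section Counts

variable {n d : ℕ}

lemma sum_cnt (j : Fin n → Fin d) : ∑ m, cnt j m = n := by
  simpa [cnt] using (card_eq_sum_card_fiberwise (f := j) (s := univ) (t := univ) (by simp)).symm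

lemma prod_comp_eq_prod_pow_cnt {A : Type*} [CommMonoid A] (g : Fin d → A) (j : Fin n → Fin d) :
    ∏ t, g (j t) = ∏ m, g m ^ cnt j m := by
  rw [← prod_fiberwise univ j (fun t => g (j t))]
  refine prod_congr rfl fun m _ => ?_
  rw [prod_congr rfl fun t ht => by rw [(mem_filter.mp ht).2], prod_const]
  rfl

lemma sum_C_prod_mul_prod_X_pow_cnt {R : Type*} [CommSemiring R] (a : Fin n → Fin d → R) :
    ∑ j : Fin n → Fin d, C (∏ t, a t (j t)) * ∏ r, X r ^ cnt j r
      = ∏ t, ∑ r, C (a t r) * (X r : MvPolynomial (Fin d) R) := by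
  rw [prod_univ_sum]
  refine sum_congr rfl fun j _ => ?_
  rw [map_prod, ← prod_comp_eq_prod_pow_cnt (fun r => (X r : MvPolynomial (Fin d) R)) j,
    prod_mul_distrib]

lemma card_filter_cnt_eq_multinomial {c : Fin d → ℕ} (hc : ∑ m, c m = n) :
    #{j : Fin n → Fin d | cnt j = c} = Nat.multinomial univ c := by
  -- expand `(∑ r, X r) ^ n` in two ways and read off the coefficient of `X ^ c`
  have hpoly := (sum_C_prod_mul_prod_X_pow_cnt (R := ℕ) (n := n) (d := d) fun _ _ => 1).trans
    (by rw [prod_const, card_univ, Fintype.card_fin, sum_C_mul_X_pow_eq])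
  have := sum_mul_apply_eq_of_sum_C_mul_prod_X_pow_eq hpoly fun e => if e = c then 1 else 0
  simpa [sum_filter, piAntidiag_univ_fin_eq_antidiagonalTuple, Nat.mem_antidiagonalTuple, hc]
    using this

lemma sum_prod_mul_comp_cnt_eq {R : Type*} [CommSemiring R] (M : Matrix (Fin d) (Fin d) R)
    {j : Fin n → Fin d} {k : Fin d → ℕ} (hj : cnt j = k) (f : (Fin d → ℕ) → R) :
    ∑ j', (∏ t, M (j t) (j' t)) * f (cnt j')
      = ∑ α ∈ Fintype.piFinset fun m => Nat.antidiagonalTuple d (k m),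
          (∏ m, (Nat.multinomial univ (α m) : R) * ∏ r, M m r ^ α m r) * f fun r => ∑ m, α m r := by
  refine sum_mul_apply_eq_of_sum_C_mul_prod_X_pow_eq ?_ f
  rw [sum_C_prod_mul_prod_X_pow_cnt,
    prod_comp_eq_prod_pow_cnt (fun m => ∑ r, C (M m r) * X r) j, hj]
  simp only [sum_C_mul_X_pow_eq, piAntidiag_univ_fin_eq_antidiagonalTuple, prod_univ_sum]
  refine sum_congr rfl fun α _ => ?_
  rw [prod_mul_distrib, ← map_prod, prod_comm]
  simp only [prod_pow_eq_pow_sum]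

end Counts

section SymmetricSubspace

variable {d n : ℕ}

lemma pvec_eq_ite {k : Fin d → ℕ} (hk : k ∈ Nat.antidiagonalTuple d n) (j : Fin n → Fin d) :
    pvec d n k j = if cnt j = k then (√(Nat.multinomial univ k : ℝ) : ℂ)⁻¹ else 0 := by
  rw [pvec, card_filter_cnt_eq_multinomial (Nat.mem_antidiagonalTuple.mp hk)]

lemma conjTranspose_Pmat_mulVec (y : (Fin d → ℕ) → ℂ) :
    (Pmat d n)ᴴ *ᵥ (fun i => y i.1)
      = fun j => (√(Nat.multinomial univ (cnt j) : ℝ) : ℂ)⁻¹ * y (cnt j) := by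
  ext j
  simp only [mulVec, dotProduct, conjTranspose_apply, Pmat, of_apply]
  rw [sum_coe_sort (Nat.antidiagonalTuple d n) fun c => star (pvec d n c j) * y c,
    sum_eq_single_of_mem (cnt j) (Nat.mem_antidiagonalTuple.mpr (sum_cnt j))]
  · simp [pvec_eq_ite (Nat.mem_antidiagonalTuple.mpr (sum_cnt j))]
  · intro c hc hne
    simp [pvec_eq_ite hc, Ne.symm hne]

lemma Pmat_mulVec_apply_of_forall_cnt_eq {v : (Fin n → Fin d) → ℂ}
    {i : Nat.antidiagonalTuple d n} {a : ℂ}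
    (hv : ∀ j, cnt j = i.1 → v j = a) :
    (Pmat d n *ᵥ v) i = (√(Nat.multinomial univ i.1 : ℝ) : ℂ) * a := by
  simp only [mulVec, dotProduct, Pmat, of_apply, pvec_eq_ite i.2, ite_mul, zero_mul,
    sum_ite, sum_const_zero, add_zero]
  rw [sum_congr rfl fun j hj => by rw [hv j (mem_filter.mp hj).2], sum_const,
    card_filter_cnt_eq_multinomial (Nat.mem_antidiagonalTuple.mp i.2), nsmul_eq_mul, ← mul_assoc]
  congr 1
  have h := Real.div_sqrt (x := Nat.multinomial univ i.1)
  rw [div_eq_mul_inv] at h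
  exact_mod_cast h

end SymmetricSubspace

/-- Main theorem: explicit formula for the action of the `n`-fold symmetric
Kronecker product `S_n(M)` in terms of the rows of `M`, multinomial
coefficients, and square roots of factorials. -/
theorem symKron_action (d n : ℕ) (M : Matrix (Fin d) (Fin d) ℂ)
    (y : (Fin d → ℕ) → ℂ) (k : Fin d → ℕ) (hk : k ∈ Finset.Nat.antidiagonalTuple d n) :
    (symKron d n M).mulVec (fun i => y i.1) ⟨k, hk⟩ =
      ((Real.sqrt ((∏ m, Nat.factorial (k m) : ℕ)) : ℝ) : ℂ)⁻¹ *
        ∑ α ∈ Fintype.piFinset (fun m => Finset.Nat.antidiagonalTuple d (k m)),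
          (∏ m, (Nat.multinomial Finset.univ (α m) : ℂ) * ∏ r, M m r ^ α m r) *
            (((Real.sqrt ((∏ r, Nat.factorial (∑ m, α m r) : ℕ)) : ℝ) : ℂ) *
              y (fun r => ∑ m, α m r)) := by
  rw [symKron, ← mulVec_mulVec, ← mulVec_mulVec, conjTranspose_Pmat_mulVec,
    Pmat_mulVec_apply_of_forall_cnt_eq (v := kronPow d n M *ᵥ _) fun j hj =>
      sum_prod_mul_comp_cnt_eq M hj fun c => (√(Nat.multinomial univ c : ℝ) : ℂ)⁻¹ * y c,
    mul_sum, mul_sum]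
  refine sum_congr rfl fun α hα => ?_
  have hsum : ∑ m, k m = ∑ r, ∑ m, α m r := by
    rw [sum_comm]
    exact sum_congr rfl fun m _ =>
      (Nat.mem_antidiagonalTuple.mp (Fintype.mem_piFinset.mp hα m)).symm
  have hscalar := congrArg (fun x : ℝ => (x : ℂ))
    (sqrt_multinomial_mul_inv_sqrt_multinomial univ hsum)
  push_cast at hscalar ⊢
  linear_combination (∏ m, (Nat.multinomial univ (α m) : ℂ) * ∏ r, M m r ^ α m r) *
    y (fun r => ∑ m, α m r) * hscalar
end

section
/- If A, B ∈ GL(d, ℂ) satisfy AᵗB = BᵗA and A*B + B*A = 2·Id, then BA^{-1} is a complex symmetric matrix whose real (Hermitian) part equals (AA*)^{-1}; in particular Re(BA^{-1}) is Hermitian positive definite. -/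
open Matrix
open scoped ComplexOrder

namespace Matrix

variable {n R : Type*} [Fintype n] [DecidableEq n] [CommRing R]

theorem transpose_mul_inv_eq_of_transpose_mul_comm {A B : Matrix n n R} (hA : IsUnit A)
    (h : Aᵀ * B = Bᵀ * A) : (B * A⁻¹)ᵀ = B * A⁻¹ := by
  have hdet : IsUnit A.det := (isUnit_iff_isUnit_det A).mp hA
  have hdetT : IsUnit Aᵀ.det := by rwa [det_transpose]
  calc (B * A⁻¹)ᵀ = (Aᵀ)⁻¹ * (Bᵀ * A * A⁻¹) := by
        rw [transpose_mul, transpose_nonsing_inv, mul_nonsing_inv_cancel_right _ _ hdet]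
    _ = (Aᵀ)⁻¹ * Aᵀ * (B * A⁻¹) := by rw [← h, mul_assoc, mul_assoc]
    _ = B * A⁻¹ := by rw [nonsing_inv_mul _ hdetT, one_mul]

theorem mul_inv_add_conjTranspose_eq_smul_inv [StarRing R] {A B : Matrix n n R} {c : R}
    (hA : IsUnit A) (h : Aᴴ * B + Bᴴ * A = c • 1) :
    B * A⁻¹ + (B * A⁻¹)ᴴ = c • (A * Aᴴ)⁻¹ := by
  have hdet : IsUnit A.det := (isUnit_iff_isUnit_det A).mp hA
  have hdetH : IsUnit Aᴴ.det := by rw [det_conjTranspose]; exact hdet.star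
  calc B * A⁻¹ + (B * A⁻¹)ᴴ = (Aᴴ)⁻¹ * (Aᴴ * B + Bᴴ * A) * A⁻¹ := by
        rw [mul_add, add_mul, ← mul_assoc, nonsing_inv_mul _ hdetH, one_mul,
          conjTranspose_mul, conjTranspose_nonsing_inv, mul_assoc,
          mul_nonsing_inv_cancel_right _ _ hdet]
    _ = c • (A * Aᴴ)⁻¹ := by rw [h, Matrix.mul_smul, mul_one, Matrix.smul_mul, mul_inv_rev]

end Matrix

theorem BAinv_symmetric_posdef_general (d : ℕ) (A B : Matrix (Fin d) (Fin d) ℂ)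
    (hA : IsUnit A)
    (h1 : Aᵀ * B = Bᵀ * A)
    (h2 : Aᴴ * B + Bᴴ * A = (2 : ℂ) • (1 : Matrix (Fin d) (Fin d) ℂ)) :
    (B * A⁻¹)ᵀ = B * A⁻¹ ∧
    (1 / 2 : ℂ) • (B * A⁻¹ + (B * A⁻¹)ᴴ) = (A * Aᴴ)⁻¹ ∧
    ((1 / 2 : ℂ) • (B * A⁻¹ + (B * A⁻¹)ᴴ)).PosDef := by
  have hre : (1 / 2 : ℂ) • (B * A⁻¹ + (B * A⁻¹)ᴴ) = (A * Aᴴ)⁻¹ := by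
    rw [mul_inv_add_conjTranspose_eq_smul_inv hA h2, smul_smul]
    norm_num
  have hpos : (A * Aᴴ).PosDef :=
    PosDef.mul_conjTranspose_self A (vecMul_injective_iff_isUnit.mpr hA)
  exact ⟨transpose_mul_inv_eq_of_transpose_mul_comm hA h1, hre, hre ▸ hpos.inv⟩

/-- Under the compatibility conditions, `B A⁻¹` is complex symmetric and its real
(Hermitian) part equals `(A A*)⁻¹`; in particular it is Hermitian positive definite. -/
theorem BAinv_symmetric_posdef (d : ℕ) (A B : Matrix (Fin d) (Fin d) ℂ)
    (hA : IsUnit A) (hB : IsUnit B)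
    (h1 : Aᵀ * B = Bᵀ * A)
    (h2 : Aᴴ * B + Bᴴ * A = (2 : ℂ) • (1 : Matrix (Fin d) (Fin d) ℂ)) :
    (B * A⁻¹)ᵀ = B * A⁻¹ ∧
    (1 / 2 : ℂ) • (B * A⁻¹ + (B * A⁻¹)ᴴ) = (A * Aᴴ)⁻¹ ∧
    ((1 / 2 : ℂ) • (B * A⁻¹ + (B * A⁻¹)ᴴ)).PosDef :=
  BAinv_symmetric_posdef_general d A B hA h1 h2
end
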